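/- Let (X,G) be a dynamical system equipped with an invariant Borel probability measure μ. If H is a subgroup of G such that μ(X_H) > 0, where X_H = {x ∈ X : G_x = gHg⁻¹ for some g ∈ G}, then H is almost normal, i.e., N_G(H) has finite index in G. -/

import Mathlib

open MeasureTheory Pointwise

/-
The points with stabilizer exactly `H` form a Borel set `Y`: since `G` is countable, it is a
countable intersection of the closed fixed-point sets of the `g ∈ H` and of their complements for
`g ∉ H`. The translate `g • Y` consists of the points with stabilizer `g H g⁻¹`, so `X_H` is the
countable union of these translates and `μ Y > 0`; moreover translates by elements in distinct
cosets of `N_G(H)` are disjoint. Infinitely many disjoint sets of measure `μ Y` cannot fit in a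
probability space, so `G ⧸ N_G(H)` is finite.
-/

/-- The conjugate subgroup `g H g⁻¹`. -/
def conjSubgroup {G : Type*} [Group G] (g : G) (H : Subgroup G) : Subgroup G :=
  Subgroup.map (MulAut.conj g).toMonoidHom H

/-- The set `X_H` of points of `X` whose stabilizer is conjugate to `H`. -/
def setXH (G : Type*) {X : Type*} [Group G] [MulAction G X] (H : Subgroup G) : Set X :=
  {x : X | ∃ g : G, MulAction.stabilizer G x = conjSubgroup g H}

section conjSubgroup

variable {G : Type*} [Group G]

lemma conjSubgroup_one (H : Subgroup G) : conjSubgroup 1 H = H := by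
  ext h
  simp [conjSubgroup]

lemma conjSubgroup_mul (g g' : G) (H : Subgroup G) :
    conjSubgroup (g * g') H = conjSubgroup g (conjSubgroup g' H) := by
  simp only [conjSubgroup, Subgroup.map_map, map_mul]
  rfl

lemma eq_conjSubgroup_iff {K H : Subgroup G} {g : G} :
    K = conjSubgroup g H ↔ conjSubgroup g⁻¹ K = H := by
  constructor
  · rintro rfl
    rw [← conjSubgroup_mul, inv_mul_cancel, conjSubgroup_one]
  · rintro rfl
    rw [← conjSubgroup_mul, mul_inv_cancel, conjSubgroup_one]

lemma conjSubgroup_eq_self_iff {H : Subgroup G} {g : G} :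
    conjSubgroup g H = H ↔ g ∈ Subgroup.normalizer (H : Set G) :=
  Subgroup.mem_normalizer_iff_map_conj_eq.symm

lemma conjSubgroup_eq_conjSubgroup_iff {H : Subgroup G} {g g' : G} :
    conjSubgroup g H = conjSubgroup g' H ↔
      (g : G ⧸ Subgroup.normalizer (H : Set G)) = g' := by
  rw [eq_comm, eq_conjSubgroup_iff, ← conjSubgroup_mul, conjSubgroup_eq_self_iff,
    ← QuotientGroup.eq, eq_comm]

end conjSubgroup

section stabilizer

variable {G X : Type*} [Group G] [MulAction G X]

lemma smul_setOf_stabilizer_eq (g : G) (H : Subgroup G) :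
    g • {x : X | MulAction.stabilizer G x = H} =
      {x : X | MulAction.stabilizer G x = conjSubgroup g H} := by
  ext x
  rw [Set.mem_smul_set_iff_inv_smul_mem, Set.mem_ofPred_eq, Set.mem_ofPred_eq,
    MulAction.stabilizer_smul_eq_stabilizer_map_conj, eq_conjSubgroup_iff]
  rfl

lemma setXH_eq_iUnion_smul (H : Subgroup G) :
    (setXH G H : Set X) = ⋃ g : G, g • {x : X | MulAction.stabilizer G x = H} := by
  ext x
  simp [smul_setOf_stabilizer_eq, setXH]

lemma disjoint_smul_setOf_stabilizer_eq {H : Subgroup G} {g g' : G}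
    (hgg' : (g : G ⧸ Subgroup.normalizer (H : Set G)) ≠ g') :
    Disjoint (g • {x : X | MulAction.stabilizer G x = H})
      (g' • {x : X | MulAction.stabilizer G x = H}) := by
  rw [smul_setOf_stabilizer_eq, smul_setOf_stabilizer_eq, Set.disjoint_left]
  intro x hx hx'
  exact hgg' (conjSubgroup_eq_conjSubgroup_iff.mp (hx.symm.trans hx'))

lemma measurableSet_setOf_stabilizer_eq [Countable G] [TopologicalSpace X] [T2Space X]
    [MeasurableSpace X] [BorelSpace X] [ContinuousConstSMul G X] (H : Subgroup G) :
    MeasurableSet {x : X | MulAction.stabilizer G x = H} := by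
  have hY : {x : X | MulAction.stabilizer G x = H} = ⋂ g : G, {x : X | g • x = x ↔ g ∈ H} := by
    ext x
    simp [SetLike.ext_iff, MulAction.mem_stabilizer_iff]
  rw [hY]
  refine MeasurableSet.iInter fun g => ?_
  have hfix : MeasurableSet {x : X | g • x = x} :=
    (isClosed_eq (continuous_const_smul g) continuous_id).measurableSet
  by_cases hg : g ∈ H
  · simpa only [hg, iff_true] using hfix
  · simp only [hg, iff_false]
    exact hfix.compl

end stabilizer

lemma finite_of_pairwise_disjoint_smul {G X ι : Type*} [Group G] [MulAction G X]
    [MeasurableSpace X] [MeasurableConstSMul G X] {μ : Measure X} [IsFiniteMeasure μ]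
    {A : Set X} (hinv : ∀ g : G, μ (g • A) = μ A) (hA : MeasurableSet A) (hA0 : μ A ≠ 0)
    (g : ι → G) (hdisj : Pairwise fun i j => Disjoint (g i • A) (g j • A)) : Finite ι := by
  have hfin := Measure.finite_const_le_meas_of_disjoint_iUnion μ (pos_iff_ne_zero.mpr hA0)
    (fun i => hA.const_smul (g i)) hdisj (measure_ne_top μ _)
  simp only [hinv, le_refl, Set.ofPred_true] at hfin
  exact Set.finite_univ_iff.mp hfin

theorem stmt7_general {G X : Type*} [Group G] [Countable G]
    [TopologicalSpace X] [T2Space X]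
    [MeasurableSpace X] [BorelSpace X]
    [MulAction G X] [ContinuousConstSMul G X]
    (μ : Measure X) [IsProbabilityMeasure μ]
    (hinv : ∀ (g : G) (A : Set X), μ (g • A) = μ A)
    (H : Subgroup G)
    (hpos : 0 < μ (setXH G H : Set X)) :
    (Subgroup.normalizer (H : Set G)).FiniteIndex := by
  set Y : Set X := {x | MulAction.stabilizer G x = H}
  have hY0 : μ Y ≠ 0 := by
    intro hY
    rw [setXH_eq_iUnion_smul, measure_iUnion_null fun g => (hinv g Y).trans hY] at hpos
    exact hpos.false
  have : Finite (G ⧸ Subgroup.normalizer (H : Set G)) :=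
    finite_of_pairwise_disjoint_smul (hinv · Y) (measurableSet_setOf_stabilizer_eq H) hY0
      Quotient.out fun q q' hqq' =>
        disjoint_smul_setOf_stabilizer_eq (by rwa [QuotientGroup.out_eq', QuotientGroup.out_eq'])
  exact Subgroup.finiteIndex_of_finite_quotient

/-- Let `(X,G)` be a dynamical system with an invariant Borel probability measure `μ`. If `H` is a
subgroup of `G` with `μ(X_H) > 0`, then `H` is almost normal, i.e. `N_G(H)` has finite index. -/
theorem stmt7 {G X : Type*} [Group G] [Countable G]
    [TopologicalSpace X] [CompactSpace X] [T2Space X]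
    [MeasurableSpace X] [BorelSpace X]
    [MulAction G X] [ContinuousConstSMul G X]
    (μ : Measure X) [IsProbabilityMeasure μ]
    (hinv : ∀ (g : G) (A : Set X), μ (g • A) = μ A)
    (H : Subgroup G)
    (hpos : 0 < μ (setXH G H : Set X)) :
    (Subgroup.normalizer (H : Set G)).FiniteIndex :=
  stmt7_general μ hinv H hpos
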